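/- arXiv:1912.04401 — 2 statements merged into one kernel-verified Lean document; each statement's English description precedes it below -/
import Mathlib

section
/- Let A be an abelian group with a height function h : A → ℝ satisfying: (i) for each Q ∈ A there is a constant C₁ such that h(P+Q) ≤ 2h(P) + C₁ for all P ∈ A; (ii) there is an integer m ≥ 2 and a constant C₂ such that h(mP) ≥ m²h(P) − C₂ for all P ∈ A; (iii) for every constant C₃ the set {P ∈ A : h(P) ≤ C₃} is finite. If moreover A/mA is finite for the integer m in (ii), then A is finitely generated. -/
/-!
Choose a finite set `S` of representatives of `A / mA`. Writing `P = m • P' + Q` with `Q ∈ S`,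
properties (i) and (ii) give `m² h(P') ≤ 2 h(P) + C` for a constant `C` independent of `P`;
since `m² ≥ 4`, `h(P') ≤ h(P) - 1` as soon as `h(P)` exceeds some bound `K`. Iterating, every
point lies in the subgroup generated by `S` and the finite set `{P | h P ≤ K}`.
-/

namespace AddSubgroup

variable {A : Type*} [AddCommGroup A]

theorem exists_finite_sub_mem_of_finite_quotient {H : AddSubgroup A} (hH : Finite (A ⧸ H)) :
    ∃ S : Set A, S.Finite ∧ ∀ P : A, ∃ Q ∈ S, P - Q ∈ H := by
  refine ⟨Set.range (fun q : A ⧸ H => q.out), Set.finite_range _, fun P => ?_⟩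
  refine ⟨(P : A ⧸ H).out, ⟨_, rfl⟩, ?_⟩
  rw [← QuotientAddGroup.eq_iff_sub_mem, QuotientAddGroup.out_eq']

theorem closure_eq_top_of_height_descent (h : A → ℝ) (m : ℤ) (S : Set A) (K : ℝ)
    (hdesc : ∀ P : A, K < h P → ∃ P' : A, ∃ Q ∈ S, P = m • P' + Q ∧ h P' ≤ h P - 1) :
    closure (S ∪ {P | h P ≤ K}) = ⊤ := by
  set T := S ∪ {P | h P ≤ K}
  have key : ∀ n : ℕ, ∀ P : A, h P ≤ K + n → P ∈ closure T := by
    intro n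
    induction n with
    | zero => exact fun P hP => subset_closure (Or.inr (by simpa using hP))
    | succ n ih =>
      intro P hP
      rcases le_or_gt (h P) K with hPK | hKP
      · exact subset_closure (Or.inr hPK)
      obtain ⟨P', Q, hQ, rfl, hP'⟩ := hdesc P hKP
      have hP'mem : P' ∈ closure T := ih P' (by push_cast at hP; linarith)
      exact add_mem (zsmul_mem hP'mem m) (subset_closure (Or.inl hQ))
  refine eq_top_iff.2 fun P _ => key ⌈h P - K⌉₊ P ?_
  linarith [Nat.le_ceil (h P - K)]

end AddSubgroup

theorem AddGroup.fg_of_height_descent {A : Type*} [AddCommGroup A] (h : A → ℝ) (m : ℤ)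
    (S : Set A) (K : ℝ) (hS : S.Finite) (hK : {P : A | h P ≤ K}.Finite)
    (hdesc : ∀ P : A, K < h P → ∃ P' : A, ∃ Q ∈ S, P = m • P' + Q ∧ h P' ≤ h P - 1) :
    AddGroup.FG A :=
  AddGroup.fg_iff.2 ⟨_, AddSubgroup.closure_eq_top_of_height_descent h m S K hdesc, hS.union hK⟩

theorem exists_uniform_bound_height_sub {A : Type*} [AddCommGroup A] (h : A → ℝ)
    (h1 : ∀ Q : A, ∃ C : ℝ, ∀ P : A, h (P + Q) ≤ 2 * h P + C) {S : Set A} (hS : S.Finite) :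
    ∃ C : ℝ, ∀ Q ∈ S, ∀ P : A, h (P - Q) ≤ 2 * h P + C := by
  choose c hc using fun Q : A => h1 (-Q)
  obtain ⟨C, hC⟩ := (hS.image c).bddAbove
  refine ⟨C, fun Q hQ P => ?_⟩
  rw [sub_eq_add_neg]
  linarith [hc Q P, hC (Set.mem_image_of_mem c hQ)]

theorem le_sub_one_of_mul_le_two_mul_add {a x y C : ℝ} (ha : 4 ≤ a)
    (hxy : a * x ≤ 2 * y + C) (hy : max 1 ((C + 4) / 2) < y) : x ≤ y - 1 := by
  have hy1 : 1 < y := (le_max_left _ _).trans_lt hy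
  have hyC : (C + 4) / 2 < y := (le_max_right _ _).trans_lt hy
  rcases le_or_gt x 0 with hx | hx
  · linarith
  · nlinarith

/-- **Descent theorem.** An abelian group with a height function satisfying the three
descent properties, and with finite quotient by `m`-multiples, is finitely generated. -/
theorem descent_theorem (A : Type*) [AddCommGroup A] (h : A → ℝ) (m : ℤ) (hm : 2 ≤ m)
    (h1 : ∀ Q : A, ∃ C₁ : ℝ, ∀ P : A, h (P + Q) ≤ 2 * h P + C₁)
    (h2 : ∃ C₂ : ℝ, ∀ P : A, (m : ℝ) ^ 2 * h P - C₂ ≤ h (m • P))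
    (h3 : ∀ C₃ : ℝ, {P : A | h P ≤ C₃}.Finite)
    (hfin : Finite (A ⧸ (AddMonoidHom.mk' (fun P : A => m • P)
      (fun P Q => smul_add m P Q)).range)) :
    AddGroup.FG A := by
  obtain ⟨S, hS, hrep⟩ := AddSubgroup.exists_finite_sub_mem_of_finite_quotient hfin
  obtain ⟨C₁, hC₁⟩ := exists_uniform_bound_height_sub h h1 hS
  obtain ⟨C₂, hC₂⟩ := h2
  have hm2 : (4 : ℝ) ≤ (m : ℝ) ^ 2 := by
    have : (2 : ℝ) ≤ m := by exact_mod_cast hm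
    nlinarith
  refine AddGroup.fg_of_height_descent h m S _ hS (h3 (max 1 ((C₁ + C₂ + 4) / 2))) ?_
  intro P hP
  obtain ⟨Q, hQ, P', hP'⟩ := hrep P
  change m • P' = P - Q at hP'
  refine ⟨P', Q, hQ, by rw [hP', sub_add_cancel], ?_⟩
  have hheight : (m : ℝ) ^ 2 * h P' ≤ 2 * h P + (C₁ + C₂) := by
    linarith [hC₁ Q hQ P, hP' ▸ hC₂ P']
  exact le_sub_one_of_mul_le_two_mul_add hm2 hheight hP
end

section
/- Let A, B be integers with 4A³ + 27B² ≠ 0 and let a, b be coprime integers. Set F(a,b) = a⁴ − 2Aa²b² − 8Bab³ + A²b⁴ and G(a,b) = 4a³b + 4Aab³ + 4Bb⁴. Then gcd(F(a,b), G(a,b)) divides 4(4A³ + 27B²). -/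
/-!
Write `F`, `G` for the numerator and denominator of `x(2P)` at `x(P) = a / b` on
`y² = x³ + Ax + B`. Explicit Bézout identities put `4(4A³ + 27B²) b⁷` and
`4(4A³ + 27B²) a⁷` in the ideal `(F, G)`, so any common divisor of `F` and `G` divides
both; since `a⁷` and `b⁷` are coprime, it divides `4(4A³ + 27B²)`.
-/

section Duplication

variable {R : Type*} [CommRing R]

def dupNumerator (A B a b : R) : R :=
  a ^ 4 - 2 * A * a ^ 2 * b ^ 2 - 8 * B * a * b ^ 3 + A ^ 2 * b ^ 4

def dupDenominator (A B a b : R) : R :=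
  4 * a ^ 3 * b + 4 * A * a * b ^ 3 + 4 * B * b ^ 4

theorem disc_mul_pow_right_eq (A B a b : R) :
    4 * (4 * A ^ 3 + 27 * B ^ 2) * b ^ 7 =
      (12 * a ^ 2 * b + 16 * A * b ^ 3) * dupNumerator A B a b +
        (-3 * a ^ 3 + 5 * A * a * b ^ 2 + 27 * B * b ^ 3) * dupDenominator A B a b := by
  unfold dupNumerator dupDenominator
  ring

theorem disc_mul_pow_left_eq (A B a b : R) :
    4 * (4 * A ^ 3 + 27 * B ^ 2) * a ^ 7 =
      ((16 * A ^ 3 + 108 * B ^ 2) * a ^ 3 - 4 * A ^ 2 * B * a ^ 2 * b +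
          (12 * A ^ 4 + 88 * A * B ^ 2) * a * b ^ 2 + (12 * A ^ 3 * B + 96 * B ^ 3) * b ^ 3) *
          dupNumerator A B a b +
        (A ^ 2 * B * a ^ 3 + (5 * A ^ 4 + 32 * A * B ^ 2) * a ^ 2 * b +
          (26 * A ^ 3 * B + 192 * B ^ 3) * a * b ^ 2 - (3 * A ^ 5 + 24 * A ^ 2 * B ^ 2) * b ^ 3) *
          dupDenominator A B a b := by
  unfold dupNumerator dupDenominator
  ring

end Duplication

theorem IsCoprime.dvd_of_dvd_mul_of_dvd_mul {R : Type*} [CommSemiring R] {x y c d : R}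
    (hxy : IsCoprime x y) (hx : d ∣ c * x) (hy : d ∣ c * y) : d ∣ c := by
  obtain ⟨u, v, huv⟩ := hxy
  have h : d ∣ c * (u * x + v * y) := by
    rw [mul_add, mul_left_comm c u, mul_left_comm c v]
    exact dvd_add (hx.mul_left u) (hy.mul_left v)
  rwa [huv, mul_one] at h

theorem dvd_disc_of_dvd_dupNumerator_of_dvd_dupDenominator {R : Type*} [CommRing R]
    {A B a b d : R} (hab : IsCoprime a b) (hF : d ∣ dupNumerator A B a b)
    (hG : d ∣ dupDenominator A B a b) : d ∣ 4 * (4 * A ^ 3 + 27 * B ^ 2) := by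
  have ha : d ∣ 4 * (4 * A ^ 3 + 27 * B ^ 2) * a ^ 7 := by
    rw [disc_mul_pow_left_eq]
    exact dvd_add (hF.mul_left _) (hG.mul_left _)
  have hb : d ∣ 4 * (4 * A ^ 3 + 27 * B ^ 2) * b ^ 7 := by
    rw [disc_mul_pow_right_eq]
    exact dvd_add (hF.mul_left _) (hG.mul_left _)
  exact (hab.pow (m := 7) (n := 7)).dvd_of_dvd_mul_of_dvd_mul ha hb

theorem gcd_duplication_divides_general (A B a b : ℤ)
    (hab : IsCoprime a b) :
    (Int.gcd (a ^ 4 - 2 * A * a ^ 2 * b ^ 2 - 8 * B * a * b ^ 3 + A ^ 2 * b ^ 4)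
        (4 * a ^ 3 * b + 4 * A * a * b ^ 3 + 4 * B * b ^ 4) : ℤ) ∣
      4 * (4 * A ^ 3 + 27 * B ^ 2) :=
  dvd_disc_of_dvd_dupNumerator_of_dvd_dupDenominator hab (Int.gcd_dvd_left _ _)
    (Int.gcd_dvd_right _ _)

/-- If `a, b` are coprime integers, then the gcd of the values `F(a,b)` and `G(a,b)`
of the homogeneous quartics in the duplication formula for `y² = x³ + Ax + B`
divides `4(4A³ + 27B²)`. -/
theorem gcd_duplication_divides (A B a b : ℤ) (hΔ : 4 * A ^ 3 + 27 * B ^ 2 ≠ 0)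
    (hab : IsCoprime a b) :
    (Int.gcd (a ^ 4 - 2 * A * a ^ 2 * b ^ 2 - 8 * B * a * b ^ 3 + A ^ 2 * b ^ 4)
        (4 * a ^ 3 * b + 4 * A * a * b ^ 3 + 4 * B * b ^ 4) : ℤ) ∣
      4 * (4 * A ^ 3 + 27 * B ^ 2) :=
  gcd_duplication_divides_general A B a b hab
end
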